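/- arXiv:2401.02179 — 6 statements merged into one kernel-verified Lean document; each statement's English description precedes it below -/
import Mathlib

section
/- Let p₁, p₂, p₃ ≥ 2 be integers and let m be the number of even integers among p₁, p₂, p₃. Let S = {(l₁,l₂,l₃) ∈ ℤ³ : 0 ≤ lᵢ ≤ pᵢ − 2} and for j ∈ {1,2,3} let σⱼ : S → S be the involution with (σⱼ(l))ⱼ = lⱼ and (σⱼ(l))ᵢ = pᵢ − 2 − lᵢ for i ≠ j. Then the number of orbits of the group of permutations of S generated by σ₁, σ₂, σ₃ equals: (1/4)·(p₁−1)(p₂−1)(p₃−1) if m ≤ 1; (1/4)·((p₁−1)(p₂−1)(p₃−1) + (pⱼ−1)) if m = 2, where pⱼ is the unique odd weight; and (1/4)·((p₁−1)(p₂−1)(p₃−1) + (p₁−1)+(p₂−1)+(p₃−1)) if m = 3. -/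
/-!
The involutions σⱼ commute and σ₀σ₁ = σ₂, so the group they generate is the image of a
homomorphism from the Klein four-group V = (ℤ/2)². Burnside's lemma for V acting through it
(V itself rather than its image, which is smaller when two weights equal 2) gives
4 · #orbits = Σ_{g ∈ V} |Fix g|. The identity fixes all ∏ (pᵢ - 1) points, and σⱼ fixes l iff
2 lᵢ = pᵢ - 2 for both i ≠ j, so it has pⱼ - 1 fixed points if the two other weights are even
and none otherwise. Which σⱼ contribute is then read off from the number m of even weights.
-/

/-- The index set S = {(l₁,l₂,l₃) ∈ ℤ³ : 0 ≤ lᵢ ≤ pᵢ − 2}. -/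
abbrev SBox (p : Fin 3 → ℤ) := {l : Fin 3 → ℤ // ∀ i, 0 ≤ l i ∧ l i ≤ p i - 2}

/-- The map σⱼ : S → S fixing the j-th coordinate and sending lᵢ to pᵢ − 2 − lᵢ for i ≠ j. -/
def sigmaFun (p : Fin 3 → ℤ) (j : Fin 3) (l : SBox p) : SBox p :=
  ⟨fun i => if i = j then l.1 i else p i - 2 - l.1 i, by
    intro i
    rcases eq_or_ne i j with h | h
    · subst h; simpa using l.2 i
    · have := l.2 i; simp only [if_neg h]; omega⟩

lemma sigmaFun_involutive (p : Fin 3 → ℤ) (j : Fin 3) :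
    Function.Involutive (sigmaFun p j) := by
  intro l
  apply Subtype.ext
  funext i
  by_cases h : i = j <;> simp [sigmaFun, h]

/-- σⱼ as a permutation of S. -/
def sigmaPerm (p : Fin 3 → ℤ) (j : Fin 3) : Equiv.Perm (SBox p) :=
  (sigmaFun_involutive p j).toPerm

section KleinFour

variable {G : Type*} [Group G] {a b : G}

def kleinFourHom (ha : a ^ 2 = 1) (hb : b ^ 2 = 1) (hab : Commute a b) :
    Multiplicative (ZMod 2 × ZMod 2) →* G :=
  MonoidHom.mk' (fun x => a ^ x.toAdd.1.val * b ^ x.toAdd.2.val) fun x y => by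
    simp only [toAdd_mul, Prod.fst_add, Prod.snd_add, ZMod.val_add, ← pow_eq_pow_mod _ ha,
      ← pow_eq_pow_mod _ hb, pow_add]
    rw [(hab.pow_pow _ _).symm.mul_mul_mul_comm]

variable (ha : a ^ 2 = 1) (hb : b ^ 2 = 1) (hab : Commute a b)

theorem kleinFourHom_ofAdd (x y : ZMod 2) :
    kleinFourHom ha hb hab (Multiplicative.ofAdd (x, y)) = a ^ x.val * b ^ y.val := rfl

theorem range_kleinFourHom : (kleinFourHom ha hb hab).range = Subgroup.closure {a, b, a * b} := by
  apply le_antisymm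
  · rintro _ ⟨x, rfl⟩
    exact mul_mem (pow_mem (Subgroup.subset_closure (by simp)) _)
      (pow_mem (Subgroup.subset_closure (by simp)) _)
  · rw [Subgroup.closure_le]
    rintro _ (rfl | rfl | rfl)
    · exact ⟨.ofAdd (1, 0), by simp [kleinFourHom_ofAdd, ZMod.val_one]⟩
    · exact ⟨.ofAdd (0, 1), by simp [kleinFourHom_ofAdd, ZMod.val_one]⟩
    · exact ⟨.ofAdd (1, 1), by simp [kleinFourHom_ofAdd, ZMod.val_one]⟩

theorem sum_kleinFourHom {M : Type*} [AddCommMonoid M] (f : G → M) :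
    ∑ x, f (kleinFourHom ha hb hab x) = f 1 + f a + f b + f (a * b) := by
  rw [← Equiv.sum_comp Multiplicative.ofAdd, Fintype.sum_prod_type]
  have sum_zmod_two : ∀ g : ZMod 2 → M, ∑ x, g x = g 0 + g 1 := Fin.sum_univ_two
  simp only [sum_zmod_two, kleinFourHom_ofAdd, ZMod.val_zero, ZMod.val_one, pow_zero, pow_one,
    one_mul, mul_one]
  abel

end KleinFour

theorem MonoidHom.card_orbits_range_mul_card {G α : Type*} [Group G] [Fintype G] [Finite α]
    (φ : G →* Equiv.Perm α) :
    Nat.card (Quotient (MulAction.orbitRel φ.range α)) * Fintype.card G =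
      ∑ g, Nat.card (Function.fixedPoints (φ g)) := by
  classical
  let _ : MulAction G α := MulAction.compHom α φ
  have orbitRel_eq : MulAction.orbitRel φ.range α = MulAction.orbitRel G α := by
    ext x y
    simp only [MulAction.orbitRel_apply, MulAction.mem_orbit_iff, Subtype.exists,
      MonoidHom.mem_range]
    constructor
    · rintro ⟨_, ⟨g, rfl⟩, rfl⟩
      exact ⟨g, rfl⟩
    · rintro ⟨g, rfl⟩
      exact ⟨φ g, ⟨g, rfl⟩, rfl⟩
  let _ := Fintype.ofFinite α
  rw [orbitRel_eq, Nat.card_eq_fintype_card,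
    ← MulAction.sum_card_fixedBy_eq_card_orbits_mul_card_group]
  exact Fintype.sum_congr _ _ fun g => Nat.card_eq_fintype_card.symm

theorem Nat.card_subtype_forall {ι : Type*} [Fintype ι] {β : ι → Type*}
    (P : ∀ i, β i → Prop) :
    Nat.card {l : ∀ i, β i // ∀ i, P i (l i)} = ∏ i, Nat.card {x // P i x} := by
  rw [Nat.card_congr Equiv.subtypePiEquivPi, Nat.card_pi]

theorem Int.card_subtype_eq_add_self (n : ℤ) :
    Nat.card {x : ℤ // n = x + x} = if Even n then 1 else 0 := by
  split_ifs with hn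
  · obtain ⟨r, hr⟩ := hn
    have : Unique {x : ℤ // n = x + x} :=
      ⟨⟨⟨r, hr⟩⟩, fun x => Subtype.ext (by have := x.2; change x.1 = r; omega)⟩
    exact Nat.card_unique
  · have : IsEmpty {x : ℤ // n = x + x} := ⟨fun x => hn ⟨x.1, x.2⟩⟩
    exact Nat.card_of_isEmpty

theorem Int.card_subtype_Icc_of_le {a b : ℤ} (h : a ≤ b + 1) :
    (Nat.card {x : ℤ // a ≤ x ∧ x ≤ b} : ℤ) = b + 1 - a := by
  change (Nat.card (Set.Icc a b) : ℤ) = _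
  simp [h]

section SumOverComplementsOfPoints

open Finset

variable {ι M : Type*} [Fintype ι] [DecidableEq ι] [AddCommMonoid M] {P : ι → Prop}
  [DecidablePred P] [∀ j, Decidable (∀ i ≠ j, P i)] (f : ι → M)

theorem Fintype.sum_ite_forall_ne_eq_zero (h : #(univ.filter P) + 2 ≤ Fintype.card ι) :
    ∑ j, (if ∀ i ≠ j, P i then f j else 0) = 0 := by
  refine Fintype.sum_eq_zero _ fun j => if_neg fun hj => ?_
  have hsub : ({j}ᶜ : Finset ι) ⊆ univ.filter P := fun i hi => by
    simpa using hj i (by simpa using hi)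
  have hcard := card_le_card hsub
  rw [card_compl, card_singleton] at hcard
  omega

theorem Fintype.sum_ite_forall_ne_eq_single {j : ι} (hj : ¬ P j)
    (h : #(univ.filter P) + 1 = Fintype.card ι) :
    ∑ k, (if ∀ i ≠ k, P i then f k else 0) = f j := by
  have filter_eq : univ.filter P = {j}ᶜ := by
    refine eq_of_subset_of_card_le (fun i hi => ?_) ?_
    · rw [mem_compl, mem_singleton]
      rintro rfl
      exact hj (mem_filter.mp hi).2
    · rw [card_compl, card_singleton]
      omega
  rw [Fintype.sum_eq_single j fun k hkj => if_neg fun hk => hj (hk j (Ne.symm hkj)),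
    if_pos fun i hi => ?_]
  have : i ∈ univ.filter P := by simpa [filter_eq] using hi
  exact (mem_filter.mp this).2

end SumOverComplementsOfPoints

section Box

variable (p : Fin 3 → ℤ)

instance : Finite (SBox p) :=
  have (i : Fin 3) : Finite {x : ℤ // 0 ≤ x ∧ x ≤ p i - 2} := Set.finite_Icc (0 : ℤ) (p i - 2)
  Finite.of_equiv _ (Equiv.subtypePiEquivPi (p := fun i x => 0 ≤ x ∧ x ≤ p i - 2)).symm

theorem card_SBox (hp : ∀ i, 2 ≤ p i) : (Nat.card (SBox p) : ℤ) = ∏ i, (p i - 1) := by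
  rw [Nat.card_subtype_forall (β := fun _ => ℤ) fun i x => 0 ≤ x ∧ x ≤ p i - 2, Nat.cast_prod]
  refine Fintype.prod_congr _ _ fun i => ?_
  rw [Int.card_subtype_Icc_of_le] <;> linarith [hp i]

theorem sigmaPerm_sq (j : Fin 3) : sigmaPerm p j ^ 2 = 1 :=
  Equiv.ext (sigmaFun_involutive p j)

theorem sigmaPerm_mul_sigmaPerm {j k l : Fin 3} (hjk : j ≠ k) (hjl : j ≠ l) (hkl : k ≠ l) :
    sigmaPerm p j * sigmaPerm p k = sigmaPerm p l := by
  -- σⱼ σₖ leaves coordinate i alone iff σⱼ and σₖ both reflect it or both leave it alone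
  have eq_iff_eq_iff_eq : ∀ i : Fin 3, i = l ↔ (i = j ↔ i = k) := by
    revert j k l; decide
  ext x i
  simp only [Equiv.Perm.coe_mul, Function.comp_apply, sigmaPerm, Function.Involutive.coe_toPerm,
    sigmaFun, eq_iff_eq_iff_eq i]
  split_ifs <;> omega

theorem sigmaPerm_apply_eq_self_iff (j : Fin 3) (l : SBox p) :
    sigmaPerm p j l = l ↔ ∀ i ≠ j, p i - 2 = l.1 i + l.1 i := by
  simp only [sigmaPerm, Function.Involutive.coe_toPerm, sigmaFun, Subtype.ext_iff, funext_iff]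
  refine forall_congr' fun i => ?_
  split_ifs with h
  · simp [h]
  · simp only [h, ne_eq, not_false_eq_true, forall_const]
    omega

theorem card_fixedPoints_sigmaPerm (hp : ∀ i, 2 ≤ p i) (j : Fin 3) :
    (Nat.card (Function.fixedPoints (sigmaPerm p j)) : ℤ) =
      if ∀ i ≠ j, Even (p i) then p j - 1 else 0 := by
  let Q (i : Fin 3) (x : ℤ) : Prop := if i = j then 0 ≤ x ∧ x ≤ p i - 2 else p i - 2 = x + x
  have e : Function.fixedPoints (sigmaPerm p j) ≃ {l : Fin 3 → ℤ // ∀ i, Q i (l i)} :=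
    (Equiv.subtypeEquivRight fun l => sigmaPerm_apply_eq_self_iff p j l).trans <|
      (Equiv.subtypeSubtypeEquivSubtypeInter (fun l : Fin 3 → ℤ => ∀ i, 0 ≤ l i ∧ l i ≤ p i - 2)
        fun l => ∀ i ≠ j, p i - 2 = l i + l i).trans <| Equiv.subtypeEquivRight fun l => by
        simp only [Q]
        constructor
        · rintro ⟨hbox, hfix⟩ i
          split_ifs with hi
          exacts [hbox i, hfix i hi]
        · intro h
          refine ⟨fun i => ?_, fun i hi => by simpa [hi] using h i⟩
          have hi := h i
          have := hp i
          split_ifs at hi <;> omega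
  have card_Q_self : (Nat.card {x // Q j x} : ℤ) = p j - 1 := by
    simp only [Q, if_pos rfl]
    rw [Int.card_subtype_Icc_of_le] <;> linarith [hp j]
  have card_Q_of_ne (i : Fin 3) (hi : i ∈ ({j}ᶜ : Finset (Fin 3))) :
      (Nat.card {x // Q i x} : ℤ) = if Even (p i) then 1 else 0 := by
    rw [Finset.mem_compl, Finset.mem_singleton] at hi
    simp [Q, hi, Int.card_subtype_eq_add_self]
  rw [Nat.card_congr e, Nat.card_subtype_forall, Nat.cast_prod, Fintype.prod_eq_mul_prod_compl j,
    card_Q_self, Finset.prod_congr rfl card_Q_of_ne, Finset.prod_boole, mul_ite, mul_one, mul_zero]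
  simp only [Finset.mem_compl, Finset.mem_singleton]

theorem four_mul_card_orbits (hp : ∀ i, 2 ≤ p i) :
    4 * (Nat.card (Quotient (MulAction.orbitRel
      (Subgroup.closure {sigmaPerm p 0, sigmaPerm p 1, sigmaPerm p 2}) (SBox p))) : ℤ) =
      ∏ i, (p i - 1) + ∑ j, (if ∀ i ≠ j, Even (p i) then p j - 1 else 0) := by
  have σ₀σ₁ : sigmaPerm p 0 * sigmaPerm p 1 = sigmaPerm p 2 :=
    sigmaPerm_mul_sigmaPerm p (by decide) (by decide) (by decide)
  have σ₁σ₀ : sigmaPerm p 1 * sigmaPerm p 0 = sigmaPerm p 2 :=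
    sigmaPerm_mul_sigmaPerm p (by decide) (by decide) (by decide)
  have hcomm : Commute (sigmaPerm p 0) (sigmaPerm p 1) := σ₀σ₁.trans σ₁σ₀.symm
  have burnside :=
    (kleinFourHom (sigmaPerm_sq p 0) (sigmaPerm_sq p 1) hcomm).card_orbits_range_mul_card
  have card_klein : Fintype.card (Multiplicative (ZMod 2 × ZMod 2)) = 4 := rfl
  rw [range_kleinFourHom _ _ hcomm, card_klein,
    sum_kleinFourHom _ _ hcomm fun σ => Nat.card (Function.fixedPoints σ), σ₀σ₁,
    Equiv.Perm.coe_one, Function.fixedPoints_id, Nat.card_univ] at burnside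
  have burnside_int := congrArg (Nat.cast : ℕ → ℤ) burnside
  push_cast [card_SBox p hp, card_fixedPoints_sigmaPerm p hp] at burnside_int
  rw [Fin.sum_univ_three]
  linarith

end Box

/-- Orbit counting formula (Theorem A / Theorem 2.5, combinatorial form): the number of
orbits of the group generated by σ₁, σ₂, σ₃ on S, according to the number m of even
weights among p₁, p₂, p₃. -/
theorem orbit_count (p : Fin 3 → ℤ) (hp : ∀ i, 2 ≤ p i)
    (m : ℕ) (hm : m = (Finset.univ.filter fun i => Even (p i)).card)
    (n : ℕ)
    (hn : n = Nat.card (Quotient (MulAction.orbitRel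
      (Subgroup.closure {sigmaPerm p 0, sigmaPerm p 1, sigmaPerm p 2}) (SBox p)))) :
    (m ≤ 1 → (4 * n : ℤ) = (p 0 - 1) * (p 1 - 1) * (p 2 - 1)) ∧
    (∀ j : Fin 3, m = 2 → ¬ Even (p j) →
      (4 * n : ℤ) = (p 0 - 1) * (p 1 - 1) * (p 2 - 1) + (p j - 1)) ∧
    (m = 3 → (4 * n : ℤ) =
      (p 0 - 1) * (p 1 - 1) * (p 2 - 1) + ((p 0 - 1) + (p 1 - 1) + (p 2 - 1))) := by
  subst hm hn
  rw [four_mul_card_orbits p hp, Fin.prod_univ_three]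
  refine ⟨fun hm => ?_, fun j hm hj => ?_, fun hm => ?_⟩
  · rw [Fintype.sum_ite_forall_ne_eq_zero _ (by simp only [Fintype.card_fin]; omega), add_zero]
  · rw [Fintype.sum_ite_forall_ne_eq_single (P := fun i => Even (p i)) _ hj
      (by simp only [Fintype.card_fin]; omega)]
  · have all_even : ∀ i, Even (p i) := by
      simpa using Finset.card_filter_eq_iff.mp hm
    simp only [all_even, ne_eq, implies_true, if_true, Fin.sum_univ_three]
end

section
/- Fix integers p₁, p₂, p₃ ≥ 2 and let 𝕃 be the abelian group with generators x⃗₁, x⃗₂, x⃗₃ and relations p₁x⃗₁ = p₂x⃗₂ = p₃x⃗₃ (the quotient of ℤ³ by the subgroup generated by p₁e₁ − p₂e₂ and p₂e₂ − p₃e₃); set c⃗ := p₁x⃗₁. Let l₁,l₂,l₃ and k₁,k₂,k₃ be integers with 0 ≤ lᵢ ≤ pᵢ−2 and 0 ≤ kᵢ ≤ pᵢ−2, let λ₁,λ₂,λ₃ be integers with 0 ≤ λᵢ ≤ pᵢ−1, let λ ∈ ℤ, and set x⃗ = Σᵢ lᵢx⃗ᵢ, y⃗ = Σᵢ kᵢx⃗ᵢ,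 z⃗ = Σᵢ λᵢx⃗ᵢ + λc⃗. Then the following two conditions hold simultaneously: (a) for each i, the unordered pair {pᵢ−1, lᵢ} equals the unordered pair {(λᵢ−1) mod pᵢ, (kᵢ+λᵢ) mod pᵢ} of residues in [0, pᵢ−1], and (b) −x⃗ + y⃗ + 2z⃗ = 0 in 𝕃 — if and only if either (i) kᵢ = lᵢ and λᵢ = 0 for all i and λ = 0, or (ii) there exists j ∈ {1,2,3} such that kⱼ = lⱼ, λⱼ = 0, kᵢ = pᵢ−2−lᵢ and λᵢ = lᵢ+1 for both i ≠ j, and λ = −1. -/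
/-!
Coordinatewise, condition (a) says that `(kᵢ, λᵢ)` is either `(lᵢ, 0)` or the reflection
`(pᵢ - 2 - lᵢ, lᵢ + 1)`; in both cases `-lᵢ + kᵢ + 2λᵢ = εᵢpᵢ` with `εᵢ ∈ {0, 1}`. Since
`pᵢx⃗ᵢ = c⃗`, this gives `-x⃗ + y⃗ + 2z⃗ = (ε₁ + ε₂ + ε₃ + 2λ)c⃗`, and `c⃗` has infinite order, so (b)
becomes `ε₁ + ε₂ + ε₃ + 2λ = 0`. Its solutions are `ε = 0, λ = 0` (case (i)) and exactly one
`εⱼ = 0` with `λ = -1` (case (ii)).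
-/

/-- The rank-one abelian group 𝕃(p₁,p₂,p₃): the quotient of ℤ³ by the subgroup
generated by p₁e₁ − p₂e₂ and p₂e₂ − p₃e₃, so that p₁x⃗₁ = p₂x⃗₂ = p₃x⃗₃. -/
def Lrel (p : Fin 3 → ℤ) : AddSubgroup (Fin 3 → ℤ) :=
  AddSubgroup.closure {![p 0, -p 1, 0], ![0, p 1, -p 2]}

abbrev LGroup (p : Fin 3 → ℤ) := (Fin 3 → ℤ) ⧸ Lrel p

/-- The generators x⃗₁, x⃗₂, x⃗₃ of 𝕃. -/
def xg (p : Fin 3 → ℤ) (i : Fin 3) : LGroup p := QuotientAddGroup.mk (Pi.single i 1)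

/-- The canonical element c⃗ = p₁x⃗₁. -/
def cg (p : Fin 3 → ℤ) : LGroup p := p 0 • xg p 0

/-- The dualizing element ω⃗ = c⃗ − x⃗₁ − x⃗₂ − x⃗₃. -/
def wg (p : Fin 3 → ℤ) : LGroup p := cg p - xg p 0 - xg p 1 - xg p 2

lemma zsmul_xg_eq_cg (p : Fin 3 → ℤ) (i : Fin 3) : p i • xg p i = cg p := by
  have h₁ : ![p 0, -p 1, 0] ∈ Lrel p := AddSubgroup.subset_closure (by simp)
  have h₂ : ![0, p 1, -p 2] ∈ Lrel p := AddSubgroup.subset_closure (by simp)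
  rw [cg, xg, xg, ← QuotientAddGroup.mk_zsmul, ← QuotientAddGroup.mk_zsmul,
    QuotientAddGroup.eq_iff_sub_mem]
  fin_cases i
  · simp
  · convert neg_mem h₁ using 1
    ext j; fin_cases j <;> simp
  · convert neg_mem (add_mem h₁ h₂) using 1
    ext j; fin_cases j <;> simp

lemma zsmul_cg_eq_zero_iff {p : Fin 3 → ℤ} (hp : ∀ i, p i ≠ 0) {n : ℤ} :
    n • cg p = 0 ↔ n = 0 := by
  refine ⟨fun h => ?_, fun h => h ▸ zero_smul ℤ _⟩
  rw [cg, xg, smul_smul, ← QuotientAddGroup.mk_zsmul, QuotientAddGroup.eq_zero_iff, Lrel,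
    AddSubgroup.mem_closure_pair] at h
  obtain ⟨a, b, hab⟩ := h
  have hb : b = 0 := by simpa [hp 2] using congrFun hab 2
  have ha : a = 0 := by simpa [hb, hp 1] using congrFun hab 1
  simpa [ha, hp 0, eq_comm] using congrFun hab 0

theorem Int.emod_eq_ite {a b : ℤ} (h₁ : -b ≤ a) (h₂ : a < 2 * b) :
    a % b = if a < 0 then a + b else if a < b then a else a - b := by
  split_ifs with h h'
  · rw [Int.emod_eq_add_self_emod, Int.emod_eq_of_lt] <;> omega
  · rw [Int.emod_eq_of_lt] <;> omega
  · rw [Int.emod_eq_sub_self_emod, Int.emod_eq_of_lt] <;> omega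

lemma pair_condition_iff {p l k lam : ℤ} (hl : 0 ≤ l ∧ l ≤ p - 2)
    (hk : 0 ≤ k ∧ k ≤ p - 2) (hlam : 0 ≤ lam ∧ lam ≤ p - 1) :
    ({p - 1, l} : Multiset ℤ) = {(lam - 1) % p, (k + lam) % p} ↔
      (k = l ∧ lam = 0) ∨ (k = p - 2 - l ∧ lam = l + 1) := by
  rw [Int.emod_eq_ite (by omega) (by omega), Int.emod_eq_ite (by omega) (by omega)]
  simp only [Multiset.insert_eq_cons, Multiset.cons_eq_cons, Multiset.singleton_inj, ne_eq,
    Multiset.singleton_eq_cons_iff, exists_eq_right_right, and_true]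
  split_ifs <;> omega

/-- `ε` is the multiple of `c⃗` contributed by the `i`-th coordinate of `−x⃗ + y⃗ + 2z⃗`. -/
lemma exists_coeff_of_fixed_or_reflected {p l k lam : ℤ} (hl : 0 ≤ l)
    (h : (k = l ∧ lam = 0) ∨ (k = p - 2 - l ∧ lam = l + 1)) :
    ∃ ε : ℤ, (ε = 0 ∨ ε = 1) ∧ ((k = l ∧ lam = 0) ↔ ε = 0) ∧
      ((k = p - 2 - l ∧ lam = l + 1) ↔ ε = 1) ∧ -l + k + 2 * lam = ε * p := by
  rcases h with h | h
  · exact ⟨0, by omega⟩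
  · exact ⟨1, by omega⟩

lemma sum_add_two_mul_eq_zero_iff {ε : Fin 3 → ℤ} (hε : ∀ i, ε i = 0 ∨ ε i = 1) (m : ℤ) :
    ∑ i, ε i + 2 * m = 0 ↔
      (∀ i, ε i = 0) ∧ m = 0 ∨ ∃ j, ε j = 0 ∧ (∀ i, i ≠ j → ε i = 1) ∧ m = -1 := by
  have := hε 0; have := hε 1; have := hε 2
  simp only [Fin.sum_univ_three, Fin.forall_fin_succ, Fin.exists_fin_succ, Fin.succ_zero_eq_one,
    Fin.succ_one_eq_two, IsEmpty.forall_iff, IsEmpty.exists_iff, ne_eq, Fin.reduceEq,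
    not_true_eq_false, not_false_eq_true, forall_const, true_and, and_true, or_false]
  omega

lemma neg_add_add_two_nsmul_eq_zero_iff {p l k lam : Fin 3 → ℤ} {lc : ℤ}
    (hl : ∀ i, 0 ≤ l i ∧ l i ≤ p i - 2)
    (hA : ∀ i, (k i = l i ∧ lam i = 0) ∨ (k i = p i - 2 - l i ∧ lam i = l i + 1)) :
    -(∑ i, l i • xg p i) + (∑ i, k i • xg p i) + 2 • ((∑ i, lam i • xg p i) + lc • cg p) = 0 ↔
      ((∀ i, k i = l i ∧ lam i = 0) ∧ lc = 0) ∨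
      (∃ j, k j = l j ∧ lam j = 0 ∧
        (∀ i, i ≠ j → k i = p i - 2 - l i ∧ lam i = l i + 1) ∧ lc = -1) := by
  choose ε hε01 hS hR hε using fun i => exists_coeff_of_fixed_or_reflected (hl i).1 (hA i)
  have hsum : -(∑ i, l i • xg p i) + (∑ i, k i • xg p i) + 2 • ((∑ i, lam i • xg p i) + lc • cg p)
      = (∑ i, ε i + 2 * lc) • cg p := by
    calc _ = ∑ i, (-l i + k i + 2 * lam i) • xg p i + (2 * lc) • cg p := by
          simp only [add_zsmul, neg_zsmul, mul_zsmul, Finset.sum_add_distrib,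
            Finset.sum_neg_distrib, Finset.sum_zsmul]
          abel
      _ = ∑ i, ε i • cg p + (2 * lc) • cg p := by
          simp only [hε, mul_zsmul, zsmul_xg_eq_cg]
      _ = _ := by rw [← Finset.sum_smul, ← add_zsmul]
  rw [hsum, zsmul_cg_eq_zero_iff (fun i => by have := hl i; omega),
    sum_add_two_mul_eq_zero_iff hε01]
  simp only [hS, hR, ← and_assoc]

theorem iso_criterion_general (p l k lam : Fin 3 → ℤ) (lc : ℤ)
    (hl : ∀ i, 0 ≤ l i ∧ l i ≤ p i - 2)
    (hk : ∀ i, 0 ≤ k i ∧ k i ≤ p i - 2)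
    (hlam : ∀ i, 0 ≤ lam i ∧ lam i ≤ p i - 1) :
    ((∀ i, ({p i - 1, l i} : Multiset ℤ) =
        {(lam i - 1) % p i, (k i + lam i) % p i}) ∧
      -(∑ i, l i • xg p i) + (∑ i, k i • xg p i) +
        2 • ((∑ i, lam i • xg p i) + lc • cg p) = 0) ↔
    ((∀ i, k i = l i ∧ lam i = 0) ∧ lc = 0) ∨
    (∃ j, k j = l j ∧ lam j = 0 ∧
      (∀ i, i ≠ j → k i = p i - 2 - l i ∧ lam i = l i + 1) ∧ lc = -1) := by
  simp only [pair_condition_iff (hl _) (hk _) (hlam _)]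
  constructor
  · rintro ⟨hA, hB⟩
    exact (neg_add_add_two_nsmul_eq_zero_iff hl hA).1 hB
  · intro h
    have hA : ∀ i, (k i = l i ∧ lam i = 0) ∨ (k i = p i - 2 - l i ∧ lam i = l i + 1) := by
      rcases h with ⟨hS, -⟩ | ⟨j, hkj, hlamj, hR, -⟩
      · exact fun i => Or.inl (hS i)
      · intro i
        by_cases hij : i = j
        · exact Or.inl (hij ▸ ⟨hkj, hlamj⟩)
        · exact Or.inr (hR i hij)
    exact ⟨hA, (neg_add_add_two_nsmul_eq_zero_iff hl hA).2 h⟩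

/-- Arithmetic core of Proposition 2.3: the class equality conditions (a) and (b) for
E⟨x⃗⟩ ≅ E⟨y⃗⟩(z⃗) hold iff (i) y⃗ = x⃗, z⃗ = 0 or (ii) the reflection case. Here
x⃗ = Σlᵢx⃗ᵢ, y⃗ = Σkᵢx⃗ᵢ, z⃗ = Σλᵢx⃗ᵢ + λc⃗ in normal form. -/
theorem iso_criterion (p l k lam : Fin 3 → ℤ) (lc : ℤ)
    (hp : ∀ i, 2 ≤ p i)
    (hl : ∀ i, 0 ≤ l i ∧ l i ≤ p i - 2)
    (hk : ∀ i, 0 ≤ k i ∧ k i ≤ p i - 2)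
    (hlam : ∀ i, 0 ≤ lam i ∧ lam i ≤ p i - 1) :
    ((∀ i, ({p i - 1, l i} : Multiset ℤ) =
        {(lam i - 1) % p i, (k i + lam i) % p i}) ∧
      -(∑ i, l i • xg p i) + (∑ i, k i • xg p i) +
        2 • ((∑ i, lam i • xg p i) + lc • cg p) = 0) ↔
    ((∀ i, k i = l i ∧ lam i = 0) ∧ lc = 0) ∨
    (∃ j, k j = l j ∧ lam j = 0 ∧
      (∀ i, i ≠ j → k i = p i - 2 - l i ∧ lam i = l i + 1) ∧ lc = -1) :=
  iso_criterion_general p l k lam lc hl hk hlam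
end

section
/- Fix integers p₁, p₂, p₃ ≥ 2, let 𝕃 be the abelian group with generators x⃗₁, x⃗₂, x⃗₃ and relations p₁x⃗₁ = p₂x⃗₂ = p₃x⃗₃, set c⃗ := p₁x⃗₁ and ω⃗ := c⃗ − x⃗₁ − x⃗₂ − x⃗₃. Let S = {(l₁,l₂,l₃) ∈ ℤ³ : 0 ≤ lᵢ ≤ pᵢ−2} and for j ∈ {1,2,3} define σⱼ : 𝕃 × S → 𝕃 × S by σⱼ(v, l) = (v + Σ_{i≠j} lᵢx⃗ᵢ − x⃗ⱼ, l′) where l′ⱼ = lⱼ and l′ᵢ = pᵢ−2−lᵢ for i ≠ j. Then for every (v, l) ∈ 𝕃 × S and every i: σᵢ(σᵢ(v, l)) = (v + 2ω⃗, l), and for any permutation {i,j,k} = {1,2,3}: σⱼ(σᵢ(v, l)) = σₖ(v + ω⃗, l). -/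
/-- The map σⱼ on 𝕃 × S: σⱼ(v, l) = (v + Σ_{i≠j} lᵢx⃗ᵢ − x⃗ⱼ, σⱼ(l)). -/
def sigmaL (p : Fin 3 → ℤ) (j : Fin 3) (vl : LGroup p × SBox p) : LGroup p × SBox p :=
  (vl.1 + ((∑ i ∈ Finset.univ.erase j, vl.2.1 i • xg p i) - xg p j), sigmaFun p j vl.2)

lemma rel1 (p : Fin 3 → ℤ) : p 1 • xg p 1 = p 0 • xg p 0 := by
  rw [xg, xg, ← QuotientAddGroup.mk_zsmul, ← QuotientAddGroup.mk_zsmul]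
  rw [QuotientAddGroup.eq]
  apply AddSubgroup.subset_closure
  left
  funext t
  fin_cases t <;> simp

lemma rel2 (p : Fin 3 → ℤ) : p 2 • xg p 2 = p 0 • xg p 0 := by
  have h1 : p 2 • xg p 2 = p 1 • xg p 1 := by
    rw [xg, xg, ← QuotientAddGroup.mk_zsmul, ← QuotientAddGroup.mk_zsmul]
    rw [QuotientAddGroup.eq]
    apply AddSubgroup.subset_closure
    right
    funext t
    fin_cases t <;> simp
  rw [h1, rel1]

set_option maxHeartbeats 1000000 in
/-- Computations in the proof of Lemma 2.9: σᵢσᵢ(v,l) = (v + 2ω⃗, l) and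
σⱼσᵢ(v,l) = σₖ(v + ω⃗, l) for any permutation {i,j,k} = {1,2,3}. -/
theorem sigmaL_relations (p : Fin 3 → ℤ) (hp : ∀ i, 2 ≤ p i)
    (v : LGroup p) (l : SBox p) :
    (∀ i, sigmaL p i (sigmaL p i (v, l)) = (v + 2 • wg p, l)) ∧
    (∀ i j k : Fin 3, i ≠ j → j ≠ k → i ≠ k →
      sigmaL p j (sigmaL p i (v, l)) = sigmaL p k (v + wg p, l)) := by
  have h1 := rel1 p
  have h2 := rel2 p
  have hcase : ∀ t : Fin 3, t = 0 ∨ t = 1 ∨ t = 2 := by decide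
  constructor
  · intro i
    rcases hcase i with rfl | rfl | rfl <;>
    · refine Prod.ext ?_ (Subtype.ext (funext fun t => ?_))
      · simp only [sigmaL, sigmaFun, wg, cg,
          Finset.sum_erase_eq_sub (Finset.mem_univ _), Fin.sum_univ_three,
          show ((2:Fin 3) = 0) = False from by decide, show ((2:Fin 3) = 1) = False from by decide,
          show ((1:Fin 3) = 0) = False from by decide, show ((1:Fin 3) = 2) = False from by decide,
          show ((0:Fin 3) = 1) = False from by decide, show ((0:Fin 3) = 2) = False from by decide,
          show ((0:Fin 3) = 0) = True from by decide, show ((1:Fin 3) = 1) = True from by decide,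
          show ((2:Fin 3) = 2) = True from by decide,
          if_true, if_false, ite_true, ite_false]
        first
        | linear_combination (norm := module) h1 + h2
        | linear_combination (norm := module) h1
        | linear_combination (norm := module) h2
        | module
      · rcases hcase t with rfl | rfl | rfl <;>
          simp only [sigmaL, sigmaFun, show ((2:Fin 3) = 0) = False from by decide, show ((2:Fin 3) = 1) = False from by decide,
            show ((1:Fin 3) = 0) = False from by decide, show ((1:Fin 3) = 2) = False from by decide,
            show ((0:Fin 3) = 1) = False from by decide, show ((0:Fin 3) = 2) = False from by decide,
            show ((0:Fin 3) = 0) = True from by decide, show ((1:Fin 3) = 1) = True from by decide,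
            show ((2:Fin 3) = 2) = True from by decide,
            if_true, if_false, ite_true, ite_false] <;> ring
  · intro i j k hij hjk hik
    rcases hcase i with rfl | rfl | rfl <;> rcases hcase j with rfl | rfl | rfl <;>
      rcases hcase k with rfl | rfl | rfl <;>
    first
    | exact absurd rfl hij
    | exact absurd rfl hjk
    | exact absurd rfl hik
    | · refine Prod.ext ?_ (Subtype.ext (funext fun t => ?_))
        · simp only [sigmaL, sigmaFun, wg, cg,
            Finset.sum_erase_eq_sub (Finset.mem_univ _), Fin.sum_univ_three,
            show ((2:Fin 3) = 0) = False from by decide, show ((2:Fin 3) = 1) = False from by decide,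
            show ((1:Fin 3) = 0) = False from by decide, show ((1:Fin 3) = 2) = False from by decide,
            show ((0:Fin 3) = 1) = False from by decide, show ((0:Fin 3) = 2) = False from by decide,
            show ((0:Fin 3) = 0) = True from by decide, show ((1:Fin 3) = 1) = True from by decide,
            show ((2:Fin 3) = 2) = True from by decide,
            if_true, if_false, ite_true, ite_false]
          first
          | linear_combination (norm := module) h1 + h2
          | linear_combination (norm := module) h1
          | linear_combination (norm := module) h2
          | module
        · rcases hcase t with rfl | rfl | rfl <;>
          simp only [sigmaL, sigmaFun, show ((2:Fin 3) = 0) = False from by decide, show ((2:Fin 3) = 1) = False from by decide,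
            show ((1:Fin 3) = 0) = False from by decide, show ((1:Fin 3) = 2) = False from by decide,
            show ((0:Fin 3) = 1) = False from by decide, show ((0:Fin 3) = 2) = False from by decide,
            show ((0:Fin 3) = 0) = True from by decide, show ((1:Fin 3) = 1) = True from by decide,
            show ((2:Fin 3) = 2) = True from by decide,
            if_true, if_false, ite_true, ite_false] <;> ring
end

section
/- Fix integers p₁, p₂, p₃ ≥ 2 with p₁p₂p₃ ≠ p₁p₂ + p₂p₃ + p₃p₁, let 𝕃 be the abelian group with generators x⃗₁, x⃗₂, x⃗₃ and relations p₁x⃗₁ = p₂x⃗₂ = p₃x⃗₃, set c⃗ := p₁x⃗₁ and ω⃗ := c⃗ − x⃗₁ − x⃗₂ − x⃗₃. Then the quotient group 𝕃/ℤω⃗ is finite of cardinality |p₁p₂p₃ − p₁p₂ − p₂p₃ − p₃p₁|. -/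
/-- The quotient 𝕃/ℤω⃗ by the cyclic subgroup generated by the dualizing element. -/
abbrev LBar (p : Fin 3 → ℤ) := LGroup p ⧸ AddSubgroup.zmultiples (wg p)

open Matrix in
lemma index_span_rows (v : Fin 3 → (Fin 3 → ℤ))
    (hd : (Matrix.of fun i j => v i j).det ≠ 0) :
    (AddSubgroup.closure (Set.range v)).index
      = ((Matrix.of fun i j => v i j).det).natAbs := by
  classical
  set A : Matrix (Fin 3) (Fin 3) ℤ := Matrix.of fun i j => v i j with hA
  -- linear independence of the rows
  have hli : LinearIndependent ℤ v := by
    rw [Fintype.linearIndependent_iff]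
    intro g hg
    have h1 : g ᵥ* A = 0 := by
      ext j
      have := congrFun hg j
      simpa [hA, Matrix.vecMul, dotProduct, Finset.sum_apply] using this
    have h2 : g ᵥ* (A * A.adjugate) = 0 := by
      rw [← Matrix.vecMul_vecMul, h1, Matrix.zero_vecMul]
    rw [Matrix.mul_adjugate] at h2
    intro i
    have := congrFun h2 i
    simp [Matrix.vecMul, dotProduct, Matrix.one_apply, mul_ite, Finset.sum_ite_eq,
      mul_comm] at this
    rcases this with h | h
    · exact h
    · exact absurd h hd
  set N : Submodule ℤ (Fin 3 → ℤ) := Submodule.span ℤ (Set.range v) with hN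
  have hcl : AddSubgroup.closure (Set.range v) = N.toAddSubgroup :=
    (Submodule.span_int_eq_addSubgroupClosure _).symm
  rw [hcl]
  obtain ⟨n, snf⟩ := Submodule.smithNormalForm (Pi.basisFun ℤ (Fin 3)) N
  have hn : n = 3 := by
    have b1 : Module.Basis (Fin 3) ℤ N := Module.Basis.span hli
    have h1 : Module.finrank ℤ N = 3 := by
      rw [Module.finrank_eq_card_basis b1]; simp
    have h2 : Module.finrank ℤ N = n := by
      rw [Module.finrank_eq_card_basis snf.bN]; simp
    omega
  subst hn
  obtain ⟨bM, bN, f, a, hsnf⟩ := snf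
  -- the index is the product of the smith coefficients
  have hidx : N.toAddSubgroup.index = ∏ i : Fin 3, (a i).natAbs := by
    have := Module.Basis.SmithNormalForm.toAddSubgroup_index_eq_ite (N := N) ⟨bM, bN, f, a, hsnf⟩
    simp only [Fintype.card_fin] at this
    rw [this, if_pos trivial]
    exact Finset.prod_congr rfl fun i _ => by
      rw [Ideal.span_singleton_toAddSubgroup_eq_zmultiples, Int.index_zmultiples]
  rw [hidx]
  -- matrices
  set B : Matrix (Fin 3) (Fin 3) ℤ := Matrix.of fun i j => (bN i : Fin 3 → ℤ) j with hB
  set Mm : Matrix (Fin 3) (Fin 3) ℤ := Matrix.of fun i j => bM i j with hMm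
  have hMmunit : IsUnit Mm.det := by
    have h1 : IsUnit ((Pi.basisFun ℤ (Fin 3)).toMatrix bM).det := by
      have := (Pi.basisFun ℤ (Fin 3)).invertibleToMatrix bM
      exact Matrix.isUnit_det_of_invertible _
    have h2 : (Pi.basisFun ℤ (Fin 3)).toMatrix bM = Mm.transpose := by
      ext i j
      simp [Module.Basis.toMatrix_apply, hMm, Matrix.transpose_apply]
    rwa [h2, Matrix.det_transpose] at h1
  -- B in terms of the diagonal matrix
  have e : Equiv.Perm (Fin 3) := Equiv.ofBijective f (Finite.injective_iff_bijective.mp f.injective)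
  have hBfact : B = Matrix.diagonal a * Mm.submatrix f id := by
    ext i j
    simp [hB, hMm, Matrix.diagonal_mul, hsnf i]
  have hBdet : B.det = (∏ i : Fin 3, a i) *
      (Equiv.Perm.sign (Equiv.ofBijective f (Finite.injective_iff_bijective.mp f.injective)) *
        Mm.det) := by
    rw [hBfact]
    have : Mm.submatrix f id = Mm.submatrix
        (Equiv.ofBijective f (Finite.injective_iff_bijective.mp f.injective)) id := rfl
    rw [Matrix.det_mul, Matrix.det_diagonal, this, Matrix.det_permute]
    push_cast
    ring
  have hBnat : B.det.natAbs = ∏ i : Fin 3, (a i).natAbs := by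
    rw [hBdet, Int.natAbs_mul]
    have hu : IsUnit ((Equiv.Perm.sign (Equiv.ofBijective f
        (Finite.injective_iff_bijective.mp f.injective)) : ℤ) * Mm.det) :=
      (Units.isUnit _).mul hMmunit
    rw [Int.isUnit_iff_natAbs_eq.mp hu, mul_one]
    exact (map_prod Int.natAbsHom a Finset.univ)
  -- express v in terms of bN and vice versa
  have hvN : ∀ i, v i ∈ N := fun i => Submodule.subset_span (Set.mem_range_self i)
  set C : Matrix (Fin 3) (Fin 3) ℤ := Matrix.of fun i j => bN.repr ⟨v i, hvN i⟩ j with hC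
  have hAB : A = C * B := by
    ext i k
    rw [Matrix.mul_apply]
    have h0 := congrArg (fun (z : N) => (z : Fin 3 → ℤ) k) (bN.sum_repr ⟨v i, hvN i⟩)
    simp only [AddSubmonoidClass.coe_finset_sum, Finset.sum_apply, SetLike.val_smul,
      Pi.smul_apply, smul_eq_mul] at h0
    simpa [hA, hC, hB] using h0.symm
  have hbNmem : ∀ j, (bN j : Fin 3 → ℤ) ∈ Submodule.span ℤ (Set.range v) := fun j => (bN j).2
  have hE : ∀ j, ∃ c : Fin 3 → ℤ, ∑ i, c i • v i = (bN j : Fin 3 → ℤ) :=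
    fun j => (Submodule.mem_span_range_iff_exists_fun ℤ).mp (hbNmem j)
  choose cE hcE using hE
  set E : Matrix (Fin 3) (Fin 3) ℤ := Matrix.of fun j i => cE j i with hEdef
  have hBE : B = E * A := by
    ext j k
    rw [Matrix.mul_apply]
    have h0 := congrFun (hcE j) k
    simp only [Finset.sum_apply, Pi.smul_apply, smul_eq_mul] at h0
    simpa [hA, hB, hEdef] using h0.symm
  -- determinant bookkeeping
  have hdet1 : A.det = C.det * B.det := by rw [hAB, Matrix.det_mul]
  have hdet2 : B.det = E.det * A.det := by rw [hBE, Matrix.det_mul]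
  have hCE : C.det * E.det = 1 := by
    have : A.det * (C.det * E.det) = A.det * 1 := by
      rw [mul_one]; nth_rewrite 2 [hdet1]; rw [hdet2]; ring
    exact mul_left_cancel₀ hd this
  have hCunit : IsUnit C.det := IsUnit.of_mul_eq_one _ hCE
  rw [← hBnat, hdet1, Int.natAbs_mul, Int.isUnit_iff_natAbs_eq.mp hCunit, one_mul]


/-- Index formula (2.7): for non-tubular weight triples, 𝕃/ℤω⃗ is finite of cardinality
|p₁p₂p₃ − p₁p₂ − p₂p₃ − p₃p₁|. -/
theorem card_LBar (p : Fin 3 → ℤ) (hp : ∀ i, 2 ≤ p i)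
    (htub : p 0 * p 1 * p 2 ≠ p 0 * p 1 + p 1 * p 2 + p 2 * p 0) :
    Finite (LBar p) ∧
    (Nat.card (LBar p) : ℤ) =
      |p 0 * p 1 * p 2 - (p 0 * p 1 + p 1 * p 2 + p 2 * p 0)| := by
  classical
  set v1 : Fin 3 → ℤ := ![p 0, -p 1, 0]
  set v2 : Fin 3 → ℤ := ![0, p 1, -p 2]
  set w' : Fin 3 → ℤ := ![p 0 - 1, -1, -1]
  set S : AddSubgroup (Fin 3 → ℤ) := AddSubgroup.closure {v1, v2, w'} with hS
  have hwg : wg p = QuotientAddGroup.mk w' := by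
    have hfun : w' = p 0 • (Pi.single 0 1 : Fin 3 → ℤ)
        - Pi.single 0 1 - Pi.single 1 1 - Pi.single 2 1 := by
      funext i
      fin_cases i <;> simp [w', Pi.single_apply]
    rw [wg, cg, xg, xg, xg, hfun]
    simp only [QuotientAddGroup.mk_zsmul, QuotientAddGroup.mk_sub]
  -- the determinant
  set d : ℤ := p 0 * p 1 * p 2 - (p 0 * p 1 + p 1 * p 2 + p 2 * p 0) with hd
  have hd0 : d ≠ 0 := sub_ne_zero.mpr htub
  have hdet : (Matrix.of fun i j => (![v1, v2, w'] : Fin 3 → Fin 3 → ℤ) i j).det = d := by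
    rw [Matrix.det_fin_three]
    simp [v1, v2, w', hd]
    ring
  have hrange : Set.range (![v1, v2, w'] : Fin 3 → Fin 3 → ℤ) = {v1, v2, w'} := by
    ext x
    constructor
    · rintro ⟨i, rfl⟩
      fin_cases i <;> simp
    · rintro (rfl | rfl | rfl)
      exacts [⟨0, rfl⟩, ⟨1, rfl⟩, ⟨2, rfl⟩]
  have hSidx : S.index = d.natAbs := by
    rw [hS, ← hrange, index_span_rows _ (hdet ▸ hd0), hdet]
  -- relate LBar to the quotient by S
  have hNle : Lrel p ≤ S := by
    rw [Lrel]
    apply AddSubgroup.closure_mono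
    intro x hx
    rcases hx with rfl | rfl
    · exact Set.mem_insert _ _
    · exact Set.mem_insert_of_mem _ (Set.mem_insert _ _)
  have hw'S : w' ∈ S := AddSubgroup.subset_closure (by simp)
  have hmap : S.map (QuotientAddGroup.mk' (Lrel p)) = AddSubgroup.zmultiples (wg p) := by
    apply le_antisymm
    · rw [AddSubgroup.map_le_iff_le_comap]
      rw [AddSubgroup.closure_le]
      rintro x (rfl | rfl | rfl)
      · have : (QuotientAddGroup.mk' (Lrel p)) v1 = 0 := by
          rw [QuotientAddGroup.mk'_apply, QuotientAddGroup.eq_zero_iff]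
          exact AddSubgroup.subset_closure (Set.mem_insert _ _)
        simp only [SetLike.mem_coe, AddSubgroup.mem_comap, this]
        exact zero_mem _
      · have : (QuotientAddGroup.mk' (Lrel p)) v2 = 0 := by
          rw [QuotientAddGroup.mk'_apply, QuotientAddGroup.eq_zero_iff]
          exact AddSubgroup.subset_closure (Set.mem_insert_of_mem _ rfl)
        simp only [SetLike.mem_coe, AddSubgroup.mem_comap, this]
        exact zero_mem _
      · simp only [SetLike.mem_coe, AddSubgroup.mem_comap, QuotientAddGroup.mk'_apply, ← hwg]
        exact AddSubgroup.mem_zmultiples _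
    · rw [AddSubgroup.zmultiples_le]
      exact ⟨w', hw'S, hwg.symm⟩
  have equiv := QuotientAddGroup.quotientQuotientEquivQuotient (Lrel p) S hNle
  have hcard : Nat.card (LBar p) = S.index := by
    have h1 : Nat.card (LBar p)
        = Nat.card ((LGroup p) ⧸ S.map (QuotientAddGroup.mk' (Lrel p))) := by
      rw [hmap]
    rw [h1, Nat.card_congr equiv.toEquiv]
    rfl
  constructor
  · apply Nat.finite_of_card_ne_zero
    rw [hcard, hSidx]
    exact Int.natAbs_ne_zero.mpr hd0
  · rw [hcard, hSidx, Int.abs_eq_natAbs]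
end

section
/- Fix integers p, q ≥ 2 and let 𝕃 be the abelian group with generators x⃗₁, x⃗₂, x⃗₃ and relations 2x⃗₁ = px⃗₂ = qx⃗₃; set c⃗ := 2x⃗₁, ω⃗ := c⃗ − x⃗₁ − x⃗₂ − x⃗₃, and x̄ⱼ := ω⃗ + x⃗ⱼ for j = 1,2,3. Let a, a′, b, b′ be integers with 0 ≤ a, a′ ≤ q−2 and 0 ≤ b, b′ ≤ p−2, and let n ∈ ℤ. If (a′−a)x̄₂ + (b′−b)x̄₃ + n·x⃗₁ ∈ {0, x̄₁, x̄₂, x̄₃} in 𝕃, then n = 0. -/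
/-- The weight triple (2, p, q). -/
def wt (p q : ℤ) : Fin 3 → ℤ := ![2, p, q]

/-- The elements x̄ⱼ = ω⃗ + x⃗ⱼ in 𝕃(2,p,q). -/
def xb (p q : ℤ) (j : Fin 3) : LGroup (wt p q) := wg (wt p q) + xg (wt p q) j

lemma k_zero' (k q A : ℤ) (hq : 2 ≤ q) (h : -(k * q) = A) (h1 : -(q-1) ≤ A) (h2 : A ≤ q-1) :
    k = 0 := by
  rcases lt_trichotomy k 0 with hk | hk | hk
  · nlinarith
  · exact hk
  · nlinarith

lemma mem_Lrel_iff (p v : Fin 3 → ℤ) :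
    v ∈ Lrel p ↔ ∃ m k : ℤ, m • ![p 0, -p 1, 0] + k • ![0, p 1, -p 2] = v :=
  AddSubgroup.mem_closure_pair

lemma key (p q A B n w0 w1 w2 : ℤ) (hp : 2 ≤ p) (hq : 2 ≤ q)
    (hA : -(q-1) ≤ A + w2 ∧ A + w2 ≤ q-1) (hB : -(p-1) ≤ B + w1 ∧ B + w1 ≤ p-1)
    (hw : w0 + w1 + w2 = 0)
    (h : (QuotientAddGroup.mk ![A + B + n, -B, -A] : LGroup (wt p q))
        = QuotientAddGroup.mk ![w0, w1, w2]) : n = 0 := by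
  rw [QuotientAddGroup.eq, mem_Lrel_iff] at h
  obtain ⟨m, k, hmk⟩ := h
  have h0 := congr_fun hmk 0
  have h1 := congr_fun hmk 1
  have h2 := congr_fun hmk 2
  simp [wt, smul_eq_mul] at h0 h1 h2
  have hk : k = 0 := k_zero' k q (A + w2) hq h2 hA.1 hA.2
  subst hk
  simp only [zero_mul, add_zero, neg_zero] at h1
  have hm : m = 0 := k_zero' m p (B + w1) hp h1 hB.1 hB.2
  subst hm
  omega

lemma xb_zero (p q : ℤ) : xb p q 0 = QuotientAddGroup.mk ![2,-1,-1] := by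
  show wg (wt p q) + xg (wt p q) 0 = _
  simp only [wg, cg, xg]
  rw [← QuotientAddGroup.mk_zsmul, ← QuotientAddGroup.mk_sub, ← QuotientAddGroup.mk_sub,
    ← QuotientAddGroup.mk_sub, ← QuotientAddGroup.mk_add]
  congr 1
  funext i; fin_cases i <;> simp [wt]

lemma xb_one (p q : ℤ) : xb p q 1 = QuotientAddGroup.mk ![1,0,-1] := by
  show wg (wt p q) + xg (wt p q) 1 = _
  simp only [wg, cg, xg]
  rw [← QuotientAddGroup.mk_zsmul, ← QuotientAddGroup.mk_sub, ← QuotientAddGroup.mk_sub,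
    ← QuotientAddGroup.mk_sub, ← QuotientAddGroup.mk_add]
  congr 1
  funext i; fin_cases i <;> simp [wt]

lemma xb_two (p q : ℤ) : xb p q 2 = QuotientAddGroup.mk ![1,-1,0] := by
  show wg (wt p q) + xg (wt p q) 2 = _
  simp only [wg, cg, xg]
  rw [← QuotientAddGroup.mk_zsmul, ← QuotientAddGroup.mk_sub, ← QuotientAddGroup.mk_sub,
    ← QuotientAddGroup.mk_sub, ← QuotientAddGroup.mk_add]
  congr 1
  funext i; fin_cases i <;> simp [wt]


/-- Extension-freeness computation in Theorem 4.7: for weight type (2,p,q), if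
(a′−a)x̄₂ + (b′−b)x̄₃ + n·x⃗₁ ∈ {0, x̄₁, x̄₂, x̄₃} with 0 ≤ a,a′ ≤ q−2 and 0 ≤ b,b′ ≤ p−2,
then n = 0. -/
theorem ext_free_T1 (p q : ℤ) (hp : 2 ≤ p) (hq : 2 ≤ q)
    (a a' b b' n : ℤ)
    (ha : 0 ≤ a ∧ a ≤ q - 2) (ha' : 0 ≤ a' ∧ a' ≤ q - 2)
    (hb : 0 ≤ b ∧ b ≤ p - 2) (hb' : 0 ≤ b' ∧ b' ≤ p - 2)
    (hmem : (a' - a) • xb p q 1 + (b' - b) • xb p q 2 + n • xg (wt p q) 0 ∈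
      ({0, xb p q 0, xb p q 1, xb p q 2} : Set (LGroup (wt p q)))) :
    n = 0 := by
  have hX : (a' - a) • xb p q 1 + (b' - b) • xb p q 2 + n • xg (wt p q) 0
      = QuotientAddGroup.mk ![(a' - a) + (b' - b) + n, -(b' - b), -(a' - a)] := by
    rw [xb_one, xb_two]
    show _ + _ + n • (QuotientAddGroup.mk (Pi.single 0 1) : LGroup (wt p q)) = _
    rw [← QuotientAddGroup.mk_zsmul, ← QuotientAddGroup.mk_zsmul, ← QuotientAddGroup.mk_zsmul,
      ← QuotientAddGroup.mk_add, ← QuotientAddGroup.mk_add]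
    congr 1
    funext i; fin_cases i <;> simp
  rw [hX, xb_zero, xb_one, xb_two] at hmem
  simp only [Set.mem_insert_iff, Set.mem_singleton_iff] at hmem
  rcases hmem with h | h | h | h
  · refine key p q (a'-a) (b'-b) n 0 0 0 hp hq ⟨by omega, by omega⟩ ⟨by omega, by omega⟩ (by ring) ?_
    rw [h, show (![(0:ℤ),0,0]) = (0 : Fin 3 → ℤ) from by funext i; fin_cases i <;> rfl,
      QuotientAddGroup.mk_zero]
  · exact key p q (a'-a) (b'-b) n 2 (-1) (-1) hp hq ⟨by omega, by omega⟩ ⟨by omega, by omega⟩ (by ring) h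
  · exact key p q (a'-a) (b'-b) n 1 0 (-1) hp hq ⟨by omega, by omega⟩ ⟨by omega, by omega⟩ (by ring) h
  · exact key p q (a'-a) (b'-b) n 1 (-1) 0 hp hq ⟨by omega, by omega⟩ ⟨by omega, by omega⟩ (by ring) h
end

section
/- Fix integers p, q ≥ 2 and let 𝕃 be the abelian group with generators x⃗₁, x⃗₂, x⃗₃ and relations 2x⃗₁ = px⃗₂ = qx⃗₃; set c⃗ := 2x⃗₁, ω⃗ := c⃗ − x⃗₁ − x⃗₂ − x⃗₃, and x̄ⱼ := ω⃗ + x⃗ⱼ for j = 1,2,3. Let a, a′, b, b′ be integers with 0 ≤ a, a′ ≤ q−2 and 0 ≤ b, b′ ≤ p−2, and let n ∈ ℤ. If (a′−a)x̄₁ + (b′−b)x̄₃ + n·x⃗₁ ∈ {0, x̄₁, x̄₂, x̄₃} in 𝕃, then n = 0. -/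
lemma comb (P : Fin 3 → ℤ) (u v w : ℤ) :
    u • xg P 0 + v • xg P 1 + w • xg P 2 = (QuotientAddGroup.mk ![u, v, w] : LGroup P) := by
  simp only [xg, ← QuotientAddGroup.mk_zsmul, ← QuotientAddGroup.mk_add]
  exact congrArg _ (by funext i; fin_cases i <;> simp)

lemma xb0_eq (p q : ℤ) : xb p q 0 = (QuotientAddGroup.mk ![2,-1,-1] : LGroup (wt p q)) := by
  rw [← comb]; simp only [xb, wg, cg, wt, Matrix.cons_val_zero, zero_smul, zero_zsmul]; abel

lemma xb1_eq (p q : ℤ) : xb p q 1 = (QuotientAddGroup.mk ![1,0,-1] : LGroup (wt p q)) := by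
  rw [← comb]; simp only [xb, wg, cg, wt, Matrix.cons_val_zero, zero_smul, zero_zsmul]; abel_nf; simp

lemma xb2_eq (p q : ℤ) : xb p q 2 = (QuotientAddGroup.mk ![1,-1,0] : LGroup (wt p q)) := by
  rw [← comb]; simp only [xb, wg, cg, wt, Matrix.cons_val_zero, zero_smul, zero_zsmul]; abel_nf; simp

lemma lhs_eq (p q A B n : ℤ) :
    A • xb p q 0 + B • xb p q 2 + n • xg (wt p q) 0 =
      (QuotientAddGroup.mk ![2*A+B+n, -(A+B), -A] : LGroup (wt p q)) := by
  rw [xb0_eq, xb2_eq]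
  show A • (QuotientAddGroup.mk ![2,-1,-1] : LGroup (wt p q)) +
      B • (QuotientAddGroup.mk ![1,-1,0] : LGroup (wt p q)) +
      n • (QuotientAddGroup.mk (Pi.single 0 1) : LGroup (wt p q)) = _
  rw [← QuotientAddGroup.mk_zsmul, ← QuotientAddGroup.mk_zsmul,
    ← QuotientAddGroup.mk_zsmul, ← QuotientAddGroup.mk_add, ← QuotientAddGroup.mk_add]
  exact congrArg _ (by funext i; fin_cases i <;> simp <;> ring)

lemma mk_eq_mk (p q : ℤ) (u v : Fin 3 → ℤ)
    (h : (QuotientAddGroup.mk u : LGroup (wt p q)) = QuotientAddGroup.mk v) :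
    ∃ s t : ℤ, -u + v = s • ![2, -p, 0] + t • ![0, p, -q] := by
  rw [QuotientAddGroup.eq] at h
  have : Lrel (wt p q) = AddSubgroup.closure {![2, -p, 0], ![0, p, -q]} := by
    simp [Lrel, wt]
  rw [this, AddSubgroup.mem_closure_pair] at h
  obtain ⟨s, t, hst⟩ := h
  exact ⟨s, t, hst.symm⟩

/-- Extension-freeness computation in Theorem 4.8: for weight type (2,p,q), if
(a′−a)x̄₁ + (b′−b)x̄₃ + n·x⃗₁ ∈ {0, x̄₁, x̄₂, x̄₃} with 0 ≤ a,a′ ≤ q−2 and 0 ≤ b,b′ ≤ p−2,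
then n = 0. -/
theorem ext_free_T2 (p q : ℤ) (hp : 2 ≤ p) (hq : 2 ≤ q)
    (a a' b b' n : ℤ)
    (ha : 0 ≤ a ∧ a ≤ q - 2) (ha' : 0 ≤ a' ∧ a' ≤ q - 2)
    (hb : 0 ≤ b ∧ b ≤ p - 2) (hb' : 0 ≤ b' ∧ b' ≤ p - 2)
    (hmem : (a' - a) • xb p q 0 + (b' - b) • xb p q 2 + n • xg (wt p q) 0 ∈
      ({0, xb p q 0, xb p q 1, xb p q 2} : Set (LGroup (wt p q)))) :
    n = 0 := by
  set A := a' - a with hA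
  set B := b' - b with hB
  rw [lhs_eq] at hmem
  have h00 : (0 : LGroup (wt p q)) = QuotientAddGroup.mk ![0,0,0] := by
    rw [show ![(0:ℤ),0,0] = (0 : Fin 3 → ℤ) from by funext i; fin_cases i <;> simp]
    rfl
  rw [xb0_eq, xb1_eq, xb2_eq, h00] at hmem
  simp only [Set.mem_insert_iff, Set.mem_singleton_iff] at hmem
  have hAbd : |A| < q := by rw [abs_lt]; omega
  have hA1bd : |A - 1| < q := by rw [abs_lt]; omega
  have hBbd : |B| < p := by rw [abs_lt]; omega
  have hB1bd : |B - 1| < p := by rw [abs_lt]; omega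
  have hq0 : q ≠ 0 := by omega
  have hp0 : p ≠ 0 := by omega
  rcases hmem with h | h | h | h <;>
    obtain ⟨s, t, hst⟩ := mk_eq_mk p q _ _ h <;>
    [skip; skip; skip; skip] <;>
    (have h0 := congrFun hst 0
     have h1 := congrFun hst 1
     have h2 := congrFun hst 2
     simp at h0 h1 h2)
  · -- target 0 : h2 : A = -(t*q)
    have hAz : A = 0 := Int.eq_zero_of_abs_lt_dvd ⟨-t, by linarith⟩ hAbd
    have ht : t = 0 := by
      have h' : t * q = 0 := by linarith
      exact (mul_eq_zero.mp h').resolve_right hq0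
    have hBz : B = 0 := Int.eq_zero_of_abs_lt_dvd ⟨-s, by
      rw [hAz, ht] at h1; linarith⟩ hBbd
    have hs : s = 0 := by
      have h' : s * p = 0 := by rw [hAz, ht, hBz] at h1; linarith
      exact (mul_eq_zero.mp h').resolve_right hp0
    rw [hAz, hBz, hs] at h0; linarith
  · -- target x̄₁
    have hAz : A - 1 = 0 := Int.eq_zero_of_abs_lt_dvd ⟨-t, by linarith⟩ hA1bd
    have ht : t = 0 := by
      have h' : t * q = 0 := by linarith
      exact (mul_eq_zero.mp h').resolve_right hq0
    have hBz : B = 0 := Int.eq_zero_of_abs_lt_dvd ⟨-s, by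
      rw [ht] at h1; linarith⟩ hBbd
    have hs : s = 0 := by
      have h' : s * p = 0 := by rw [ht, hBz] at h1; linarith
      exact (mul_eq_zero.mp h').resolve_right hp0
    rw [hBz, hs] at h0; linarith
  · -- target x̄₂
    have hB2bd : |B + 1| < p := by rw [abs_lt]; omega
    have hAz : A - 1 = 0 := Int.eq_zero_of_abs_lt_dvd ⟨-t, by linarith⟩ hA1bd
    have ht : t = 0 := by
      have h' : t * q = 0 := by linarith
      exact (mul_eq_zero.mp h').resolve_right hq0
    have hBz : B + 1 = 0 := Int.eq_zero_of_abs_lt_dvd ⟨-s, by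
      rw [ht] at h1; linarith⟩ hB2bd
    have hs : s = 0 := by
      have h' : s * p = 0 := by rw [ht] at h1; linarith
      exact (mul_eq_zero.mp h').resolve_right hp0
    rw [hs] at h0; linarith
  · -- target x̄₃
    have hAz : A = 0 := Int.eq_zero_of_abs_lt_dvd ⟨-t, by linarith⟩ hAbd
    have ht : t = 0 := by
      have h' : t * q = 0 := by linarith
      exact (mul_eq_zero.mp h').resolve_right hq0
    have hBz : B - 1 = 0 := Int.eq_zero_of_abs_lt_dvd ⟨-s, by
      rw [ht] at h1; linarith⟩ hB1bd
    have hs : s = 0 := by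
      have h' : s * p = 0 := by rw [ht] at h1; linarith
      exact (mul_eq_zero.mp h').resolve_right hp0
    rw [hs] at h0; linarith
end
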